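/- Let G_M be a maximal reducible graph, let T_M be a tree solving G_M, and let c, c' be overlapping characters occurring in T_M and inactive in G_M. Then one of the following holds: (1) T_M contains the sequence of edges c^+, c'^+, c^-, c'^- in this order along a path, with c'^- possibly missing; (2) T_M contains the sequence of edges c'^+, c^+, c'^-, c^- in this order along a path, with c^- possibly missing; (3) c^- and c'^- appear in two distinct paths and, if c and c' are conflicting in G_M, then T_M has a species node preceding both c^+ and c'^+. -/
import Mathlib


/-! # Red-black graphs and persistent phylogenies -/

/-- `EnumList R X`: the list `R` enumerates the set `X` without repetition. -/
def EnumList {C : Type} (R : List C) (X : Set C) : Prop :=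
  R.Nodup ∧ ∀ c, c ∈ R ↔ c ∈ X

/-- A red-black graph on species `S` and characters `C`: a bipartite graph whose
edges are colored black or red. -/
structure RBGraph (S C : Type) where
  black : S → C → Prop
  red : S → C → Prop

namespace RBGraph

variable {S C : Type}

/-- A character is active if it is incident to some red edge. -/
def active (G : RBGraph S C) (c : C) : Prop := ∃ s, G.red s c

/-- A character is inactive if it is incident to no red edge. -/
def inactive (G : RBGraph S C) (c : C) : Prop := ¬ G.active c

/-- Each character is incident only to black edges or only to red edges. -/
def WellFormed (G : RBGraph S C) : Prop := ∀ c, G.active c → ∀ s, ¬ G.black s c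

/-- Adjacency between a species and a character (by an edge of either color). -/
def adj (G : RBGraph S C) (s : S) (c : C) : Prop := G.black s c ∨ G.red s c

/-- Adjacency on the vertex set `S ⊕ C` of the bipartite graph. -/
def Vadj (G : RBGraph S C) : S ⊕ C → S ⊕ C → Prop
  | Sum.inl s, Sum.inr c => G.adj s c
  | Sum.inr c, Sum.inl s => G.adj s c
  | _, _ => False

/-- Two vertices are connected if joined by a path. -/
def connTo (G : RBGraph S C) (u v : S ⊕ C) : Prop := Relation.ReflTransGen G.Vadj u v

/-- A vertex belongs to the graph when it is not isolated (isolated vertices are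
always deleted). -/
def inGraph (G : RBGraph S C) (u : S ⊕ C) : Prop := ∃ v, G.Vadj u v

/-- The graph is connected: nonempty and any two of its vertices are joined by a path. -/
def Connected (G : RBGraph S C) : Prop :=
  (∃ u, G.inGraph u) ∧ ∀ u v, G.inGraph u → G.inGraph v → G.connTo u v

/-- The empty graph (no edges, hence no vertices). -/
def IsEmptyGraph (G : RBGraph S C) : Prop := ∀ s c, ¬ G.black s c ∧ ¬ G.red s c

/-- `s ∈ D(c)`: the species `s` lies in the connected component of the character `c`. -/
def sameComp (G : RBGraph S C) (c : C) (s : S) : Prop := G.connTo (Sum.inr c) (Sum.inl s)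

/-- The matrix associated with a red-black graph: `M[s,c] = 1` iff `(s,c)` is a black
edge, or `c` is active and `(s,c)` is not an edge. -/
def M (G : RBGraph S C) (s : S) (c : C) : Prop :=
  G.black s c ∨ (G.active c ∧ ¬ G.red s c)

/-- `C(s)`: the set of characters of the species `s` (in the associated matrix). -/
def speciesChars (G : RBGraph S C) (s : S) : Set C := {c | G.M s c}

/-- `S(c)`: the set of species having the character `c` (in the associated matrix). -/
def charSpecies (G : RBGraph S C) (c : C) : Set S := {s | G.M s c}

/-- A character is free if it is active and joined by red edges to all species of
the graph. -/
def free (G : RBGraph S C) (c : C) : Prop :=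
  G.active c ∧ ∀ s, G.inGraph (Sum.inl s) → G.red s c

/-- Realization of `c⁺`: add a red edge between `c` and each species of `D(c) ∖ N(c)`,
delete all black edges incident on `c` (isolated vertices disappear automatically). -/
def realizePos (G : RBGraph S C) (c : C) : RBGraph S C where
  black s d := G.black s d ∧ d ≠ c
  red s d := (d ≠ c ∧ G.red s d) ∨ (d = c ∧ G.sameComp c s ∧ ¬ G.adj s c)

/-- Delete all (red) edges incident on free characters: this realizes `c⁻` for every
character `c` that is free. -/
def removeFrees (G : RBGraph S C) : RBGraph S C where
  black s d := G.black s d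
  red s d := G.red s d ∧ ¬ G.free d

/-- One step of the application of a c-reduction: realize `c⁺`, then realize `d⁻` for
every character `d` that has become free. -/
def step (G : RBGraph S C) (c : C) : RBGraph S C := (G.realizePos c).removeFrees

/-- Application of a c-reduction (a sequence of positive characters) to the graph. -/
def applyRed : RBGraph S C → List C → RBGraph S C
  | G, [] => G
  | G, c :: cs => applyRed (G.step c) cs

/-- A c-reduction is feasible when each positive realization is defined, negative
realizations being applied as soon as a character becomes free. -/
def Feasible : RBGraph S C → List C → Prop
  | _, [] => True
  | G, c :: cs => G.inactive c ∧ Feasible (G.step c) cs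

/-- A successful reduction: a feasible c-reduction whose application results in the
empty graph. -/
def Successful (G : RBGraph S C) (R : List C) : Prop :=
  G.Feasible R ∧ (G.applyRed R).IsEmptyGraph

/-- A red Σ-graph: an induced path of length four on two active characters and three
species, with red edges. -/
def HasRedSigma (G : RBGraph S C) : Prop :=
  ∃ (c₁ c₂ : C) (s₁ s₂ s₃ : S), c₁ ≠ c₂ ∧ s₁ ≠ s₂ ∧ s₂ ≠ s₃ ∧ s₁ ≠ s₃ ∧
    G.red s₁ c₁ ∧ G.red s₂ c₁ ∧ G.red s₂ c₂ ∧ G.red s₃ c₂ ∧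
    ¬ G.adj s₁ c₂ ∧ ¬ G.adj s₃ c₁

/-- A reducible graph: connected and admitting a successful reduction (equivalently,
solved by a persistent phylogeny). -/
def Reducible (G : RBGraph S C) : Prop := G.Connected ∧ ∃ R : List C, G.Successful R

/-- A maximal character: an inactive character of the graph whose species set is not
strictly contained in the species set of another inactive character. -/
def maximalChar (G : RBGraph S C) (c : C) : Prop :=
  G.inactive c ∧ G.inGraph (Sum.inr c) ∧
    ∀ c', G.inactive c' → ¬ (G.charSpecies c ⊂ G.charSpecies c')

/-- `C_M`: the set of maximal characters. -/
def maximalChars (G : RBGraph S C) : Set C := {c | G.maximalChar c}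

/-- `G|C'`: the subgraph induced by the characters of `C'` together with the species
adjacent to them. -/
def restrict (G : RBGraph S C) (C' : Set C) : RBGraph S C where
  black s c := G.black s c ∧ c ∈ C'
  red s c := G.red s c ∧ c ∈ C'

/-- `G|C_M`: the subgraph induced by the maximal characters. -/
def maxRestrict (G : RBGraph S C) : RBGraph S C := G.restrict G.maximalChars

/-- A maximal reducible graph: a reducible red-black graph all of whose characters are
maximal (hence inactive). -/
def MaximalReducible (G : RBGraph S C) : Prop :=
  G.Reducible ∧ ∀ c, G.inGraph (Sum.inr c) → G.maximalChar c

/-- An arc of the Hasse diagram of the poset of the species of the graph ordered by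
inclusion of their character sets. -/
def hasseArc (G : RBGraph S C) (s₁ s₂ : S) : Prop :=
  G.inGraph (Sum.inl s₁) ∧ G.inGraph (Sum.inl s₂) ∧
  G.speciesChars s₁ ⊂ G.speciesChars s₂ ∧
  ¬ ∃ s₃, G.inGraph (Sum.inl s₃) ∧ G.speciesChars s₁ ⊂ G.speciesChars s₃ ∧
      G.speciesChars s₃ ⊂ G.speciesChars s₂

/-- A source of the Hasse diagram: a node with no incoming arc. -/
def IsSource (G : RBGraph S C) (s : S) : Prop :=
  G.inGraph (Sum.inl s) ∧ ∀ s', ¬ G.hasseArc s' s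

/-- A sink of the Hasse diagram: a node with no outgoing arc. -/
def IsSink (G : RBGraph S C) (s : S) : Prop :=
  G.inGraph (Sum.inl s) ∧ ∀ s', ¬ G.hasseArc s s'

/-- A chain of the Hasse diagram: a directed path from a source to a sink. -/
def IsChain (G : RBGraph S C) (l : List S) : Prop :=
  l ≠ [] ∧ l.Chain' G.hasseArc ∧
  (∀ s, l.head? = some s → G.IsSource s) ∧
  (∀ s, l.getLast? = some s → G.IsSink s)

/-- The Hasse diagram is degenerate if all its chains are trivial (singletons). -/
def Degenerate (G : RBGraph S C) : Prop := ∀ l, G.IsChain l → l.length = 1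

/-- The blocks of characters along a chain: the characters of the source, followed by
the labels `C(s_{i+1}) ∖ C(s_i)` of the arcs of the chain. -/
def chainBlockSets (G : RBGraph S C) : List S → List (Set C)
  | [] => []
  | s :: t => G.speciesChars s ::
      (List.zip (s :: t) t).map (fun p => G.speciesChars p.2 \ G.speciesChars p.1)

/-- `R` is a c-reduction of the chain `l`: the characters of the source of `l` followed
by the labels of the arcs of `l`. -/
def IsChainReduction (G : RBGraph S C) (l : List S) (R : List C) : Prop :=
  ∃ Rs : List (List C), R = Rs.flatten ∧ List.Forall₂ EnumList Rs (G.chainBlockSets l)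

/-- A safe chain: a chain whose c-reduction is feasible and whose application results
in a graph with no red Σ-graph. -/
def SafeChain (G : RBGraph S C) (l : List S) : Prop :=
  G.IsChain l ∧
  ∃ R, G.IsChainReduction l R ∧ G.Feasible R ∧ ¬ (G.applyRed R).HasRedSigma

/-- The characters of a source `s` of the diagram of `G|C_M` that are inactive in `G`. -/
def sourceChars (G : RBGraph S C) (s : S) : Set C :=
  {c | c ∈ G.maxRestrict.speciesChars s ∧ G.inactive c}

/-- A safe source for `G`: a source of a chain of the Hasse diagram of `G|C_M` whose
realization in `G` induces no red Σ-graph. -/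
def SafeSource (G : RBGraph S C) (s : S) : Prop :=
  (∃ l, G.maxRestrict.IsChain l ∧ l.head? = some s) ∧
  ∃ R, EnumList R (G.sourceChars s) ∧ G.Feasible R ∧ ¬ (G.applyRed R).HasRedSigma

/-- The state of `s` in the diagram of `G|C_M` is (the state of) a species of `G`. -/
def IsSpeciesState (G : RBGraph S C) (s : S) : Prop :=
  ∃ s', G.inGraph (Sum.inl s') ∧ G.speciesChars s' = G.maxRestrict.speciesChars s

/-- A safe source in the degenerate sense: a source of the (degenerate) diagram of
`G|C_M` whose realization in `G` induces no red Σ-graph and which is a species of `G`,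
unless no source of the diagram is a species of `G`. -/
def SafeSourceDeg (G : RBGraph S C) (s : S) : Prop :=
  G.maxRestrict.IsSource s ∧
  (∃ R, EnumList R (G.sourceChars s) ∧ G.Feasible R ∧ ¬ (G.applyRed R).HasRedSigma) ∧
  (G.IsSpeciesState s ∨ ∀ s', G.maxRestrict.IsSource s' → ¬ G.IsSpeciesState s')

/-- Two characters are conflicting if the four configurations `(0,0)`, `(0,1)`,
`(1,0)`, `(1,1)` all appear among the species of the graph. -/
def Conflicting (G : RBGraph S C) (c c' : C) : Prop :=
  (∃ s, G.inGraph (Sum.inl s) ∧ ¬ G.M s c ∧ ¬ G.M s c') ∧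
  (∃ s, G.inGraph (Sum.inl s) ∧ ¬ G.M s c ∧ G.M s c') ∧
  (∃ s, G.inGraph (Sum.inl s) ∧ G.M s c ∧ ¬ G.M s c') ∧
  (∃ s, G.inGraph (Sum.inl s) ∧ G.M s c ∧ G.M s c')

/-- Two characters overlap if they share a common species but neither species set is
contained in the other. -/
def Overlap (G : RBGraph S C) (c c' : C) : Prop :=
  (∃ s, G.M s c ∧ G.M s c') ∧
  ¬ G.charSpecies c ⊆ G.charSpecies c' ∧ ¬ G.charSpecies c' ⊆ G.charSpecies c

/-- `G` consists of the `k` connected components `F 0, …, F (k-1)`. -/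
def ComponentDecomp (G : RBGraph S C) {k : ℕ} (F : Fin k → RBGraph S C) : Prop :=
  (∀ s c, G.black s c ↔ ∃ i, (F i).black s c) ∧
  (∀ s c, G.red s c ↔ ∃ i, (F i).red s c) ∧
  (∀ i, (F i).Connected) ∧
  (∀ i j, i ≠ j → ∀ u, (F i).inGraph u → ¬ (F j).inGraph u)

end RBGraph

/-- A rooted tree with nodes labeled by `{0,1}`-vectors over the characters `C`:
the data underlying a persistent phylogeny. -/
structure PhyloTree (C V : Type) where
  root : V
  parent : V → V
  parent_root : parent root = root
  reaches_root : ∀ v, ∃ n, parent^[n] v = root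
  label : V → C → Prop

namespace PhyloTree

variable {C V : Type}

/-- `u` is a (weak) ancestor of `v`. -/
def ancestor (T : PhyloTree C V) (u v : V) : Prop := ∃ n, T.parent^[n] v = u

/-- `v` is a child of `u`. -/
def childOf (T : PhyloTree C V) (v u : V) : Prop := v ≠ T.root ∧ T.parent v = u

/-- A leaf: a node with no child. -/
def IsLeaf (T : PhyloTree C V) (v : V) : Prop := ∀ w, ¬ T.childOf w v

/-- The character `c` is gained on the edge entering `v` (the edge is labeled `c⁺`). -/
def gainAt (T : PhyloTree C V) (c : C) (v : V) : Prop :=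
  v ≠ T.root ∧ ¬ T.label (T.parent v) c ∧ T.label v c

/-- The character `c` is lost on the edge entering `v` (the edge is labeled `c⁻`). -/
def lossAt (T : PhyloTree C V) (c : C) (v : V) : Prop :=
  v ≠ T.root ∧ T.label (T.parent v) c ∧ ¬ T.label v c

/-- `T` is a persistent phylogeny for the matrix `M` (with species set `SS`) and the
set `A` of active characters. -/
def IsPersistentPhylogeny {S : Type} (T : PhyloTree C V) (M : S → C → Prop)
    (SS : Set S) (A : Set C) : Prop :=
  (∀ c, T.label T.root c ↔ c ∈ A) ∧
  (∀ v, v ≠ T.root → ∃ c, T.gainAt c v ∨ T.lossAt c v) ∧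
  (∀ c v w, T.gainAt c v → T.gainAt c w → v = w) ∧
  (∀ c v w, T.lossAt c v → T.lossAt c w → v = w) ∧
  (∀ c v w, T.gainAt c v → T.lossAt c w → T.ancestor v (T.parent w)) ∧
  (∀ s ∈ SS, ∃ v, ∀ c, T.label v c ↔ M s c)

/-- A line-tree: the tree consists of a simple path (each node has at most one child). -/
def LineTree (T : PhyloTree C V) : Prop :=
  ∀ u v w, T.childOf u w → T.childOf v w → u = v

/-- `x` is the branch-node of a branch-tree: the topmost node with more than one child,
reached from the root by a simple path, with no positive character below it. -/
def IsBranchNode (T : PhyloTree C V) (x : V) : Prop :=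
  (∃ u v, u ≠ v ∧ T.childOf u x ∧ T.childOf v x) ∧
  (∀ y, T.ancestor y x → y ≠ x → ∀ u v, T.childOf u y → T.childOf v y → u = v) ∧
  (∀ c v, T.gainAt c v → ¬ T.ancestor x (T.parent v))

/-- A branch-tree. -/
def BranchTree (T : PhyloTree C V) : Prop := ∃ x, T.IsBranchNode x

/-- The tree is in normal form: no two consecutive edges are labeled `c⁺` and `c⁻`
for the same character `c`. -/
def NormalForm (T : PhyloTree C V) : Prop :=
  ∀ c v w, T.childOf w v → ¬ (T.gainAt c v ∧ T.lossAt c w)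

/-- The edge entering `v` is positive: it is labeled only by positive characters. -/
def posEdge (T : PhyloTree C V) (v : V) : Prop :=
  v ≠ T.root ∧ ∀ c, ¬ T.lossAt c v

/-- `vs` is the longest path of `T` starting at the root and consisting only of
positive edges. -/
def IsInitialPosPath (T : PhyloTree C V) (vs : List V) : Prop :=
  vs.head? = some T.root ∧
  vs.Chain' (fun u v => T.parent v = u ∧ T.posEdge v) ∧
  (∀ z w, vs.getLast? = some z → T.childOf w z → ¬ T.posEdge w)

/-- `R` is the sequence of positive characters gained along the path `vs`. -/
def GainSeq (T : PhyloTree C V) (vs : List V) (R : List C) : Prop :=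
  ∃ Rs : List (List C), R = Rs.flatten ∧
    List.Forall₂ EnumList Rs (vs.map fun v => {c | T.gainAt c v})

/-- The node `v` of the tree represents the species `s` of the graph `G`. -/
def Represents {S : Type} (T : PhyloTree C V) (G : RBGraph S C) (v : V) (s : S) : Prop :=
  ∀ c, T.label v c ↔ G.M s c

/-- All edges of the path of `T` from `u` down to `v` are positive. -/
def PosPathBetween (T : PhyloTree C V) (u v : V) : Prop :=
  T.ancestor u v ∧ ∀ w, w ≠ T.root → T.ancestor u (T.parent w) → T.ancestor w v →
    ∀ c, ¬ T.lossAt c w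

/-- All edges of the path of `T` from `u` down to `v` are negative. -/
def NegPathBetween (T : PhyloTree C V) (u v : V) : Prop :=
  T.ancestor u v ∧ ∀ w, w ≠ T.root → T.ancestor u (T.parent w) → T.ancestor w v →
    ∀ c, ¬ T.gainAt c w

end PhyloTree

/-- `G` is solved by the tree `T`: `T` is a persistent phylogeny for the matrix
associated with `G` (on the species of `G`) and the active set of `G`. -/
def RBGraph.SolvedBy {S C V : Type} (G : RBGraph S C) (T : PhyloTree C V) : Prop :=
  T.IsPersistentPhylogeny G.M {s | G.inGraph (Sum.inl s)} {c | G.active c}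

/-- `T₁` is obtained from the line-tree `T` by inverting it: the same species labels
occur in reversed order (so each edge carries the same characters with opposite sign). -/
def InvertedLineTree {C V : Type} (T T₁ : PhyloTree C V) : Prop :=
  ∃ φ : V ≃ V,
    (∀ v, v ≠ T.root → φ v ≠ T₁.root) ∧
    (∀ v, v ≠ T.root → ∀ c, (T₁.label (φ v) c ↔ T.label v c)) ∧
    (∀ u v, u ≠ T.root → v ≠ T.root → (T.ancestor u v ↔ T₁.ancestor (φ v) (φ u)))

/-- The chain `l` of the Hasse diagram of `G` is the initial chain of the tree `T`:
the sequence of characters gained along the longest initial path of `T` made of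
positive edges is a c-reduction of `l`. -/
def PhyloTree.InitialChainOf {S C V : Type} (T : PhyloTree C V) (G : RBGraph S C)
    (l : List S) : Prop :=
  ∃ vs R, T.IsInitialPosPath vs ∧ T.GainSeq vs R ∧ G.IsChainReduction l R

namespace PPX

variable {C V : Type}

theorem anc_refl (T : PhyloTree C V) (u : V) : T.ancestor u u := ⟨0, rfl⟩

theorem anc_trans (T : PhyloTree C V) {a b c : V} (h1 : T.ancestor a b)
    (h2 : T.ancestor b c) : T.ancestor a c := by
  obtain ⟨n, hn⟩ := h1; obtain ⟨m, hm⟩ := h2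
  exact ⟨n + m, by rw [Function.iterate_add_apply, hm, hn]⟩

theorem iterate_root (T : PhyloTree C V) (n : ℕ) : T.parent^[n] T.root = T.root := by
  induction n with
  | zero => rfl
  | succ k ih => rw [Function.iterate_succ_apply, T.parent_root, ih]

theorem anc_root (T : PhyloTree C V) (q : V) : T.ancestor T.root q := T.reaches_root q

theorem eq_root_of_iterate (T : PhyloTree C V) {q : V} {n : ℕ} (hn : n ≠ 0)
    (h : T.parent^[n] q = q) : q = T.root := by
  obtain ⟨N, hN⟩ := T.reaches_root q
  have key : ∀ t : ℕ, T.parent^[n * t] q = q := by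
    intro t; induction t with
    | zero => rfl
    | succ k ih => rw [Nat.mul_succ, Function.iterate_add_apply, h, ih]
  have h1 : N ≤ n * (N + 1) := by
    have : 1 ≤ n := Nat.one_le_iff_ne_zero.mpr hn
    calc N ≤ N + 1 := by omega
      _ = 1 * (N + 1) := by ring
      _ ≤ n * (N + 1) := Nat.mul_le_mul_right _ this
  calc q = T.parent^[n * (N+1)] q := (key _).symm
    _ = T.root := by
        rw [show n * (N+1) = (n * (N+1) - N) + N by omega, Function.iterate_add_apply,
          hN, iterate_root]

theorem anc_antisymm (T : PhyloTree C V) {a b : V} (h1 : T.ancestor a b)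
    (h2 : T.ancestor b a) : a = b := by
  obtain ⟨n, hn⟩ := h1; obtain ⟨m, hm⟩ := h2
  rcases Nat.eq_zero_or_pos (n + m) with h | h
  · have hn0 : n = 0 := by omega
    subst hn0
    simpa using hn.symm
  · have hcyc : T.parent^[n + m] a = a := by
      rw [Function.iterate_add_apply, hm, hn]
    have ha : a = T.root := eq_root_of_iterate T (by omega) hcyc
    subst ha
    rw [iterate_root] at hm
    exact hm

theorem anc_total (T : PhyloTree C V) {a b q : V} (h1 : T.ancestor a q)
    (h2 : T.ancestor b q) : T.ancestor a b ∨ T.ancestor b a := by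
  obtain ⟨n, hn⟩ := h1; obtain ⟨m, hm⟩ := h2
  rcases le_total n m with h | h
  · right
    exact ⟨m - n, by rw [← hn, ← Function.iterate_add_apply, show m - n + n = m by omega, hm]⟩
  · left
    exact ⟨n - m, by rw [← hm, ← Function.iterate_add_apply, show n - m + m = n by omega, hn]⟩

theorem anc_parent (T : PhyloTree C V) (q : V) : T.ancestor (T.parent q) q :=
  ⟨1, by simp⟩

theorem anc_parent_of_ne (T : PhyloTree C V) {a q : V} (h : T.ancestor a q) (hne : a ≠ q) :
    T.ancestor a (T.parent q) := by
  obtain ⟨n, hn⟩ := h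
  match n, hn with
  | 0, hn => exact absurd (by simpa using hn) hne.symm
  | k+1, hn => exact ⟨k, by rw [← Function.iterate_succ_apply]; exact hn⟩

theorem gain_exists (T : PhyloTree C V) (hroot : ∀ e, ¬ T.label T.root e) {e : C} :
    ∀ {q : V}, T.label q e → ∃ g, T.gainAt e g ∧ T.ancestor g q := by
  suffices h : ∀ (N : ℕ) (q : V), T.parent^[N] q = T.root → T.label q e →
      ∃ g, T.gainAt e g ∧ T.ancestor g q by
    intro q hq; obtain ⟨N, hN⟩ := T.reaches_root q; exact h N q hN hq
  intro N
  induction N with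
  | zero =>
    intro q hq hl
    rw [Function.iterate_zero_apply] at hq
    subst hq
    exact absurd hl (hroot e)
  | succ k ih =>
    intro q hq hl
    by_cases hp : T.label (T.parent q) e
    · obtain ⟨g, hg, hanc⟩ := ih (T.parent q) (by rw [← Function.iterate_succ_apply]; exact hq) hp
      exact ⟨g, hg, anc_trans T hanc (anc_parent T q)⟩
    · have hqroot : q ≠ T.root := fun h => hroot e (h ▸ hl)
      exact ⟨q, ⟨hqroot, hp, hl⟩, anc_refl T q⟩

theorem loss_between (T : PhyloTree C V) {e : C} {a : V} (ha : T.label a e) :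
    ∀ {k : ℕ} {b : V}, T.parent^[k] b = a → ¬ T.label b e →
      ∃ l, T.lossAt e l ∧ T.ancestor l b ∧ T.ancestor a l ∧ l ≠ a := by
  intro k
  induction k with
  | zero =>
    intro b hb hl
    rw [Function.iterate_zero_apply] at hb
    subst hb
    exact absurd ha hl
  | succ k ih =>
    intro b hb hl
    by_cases hp : T.label (T.parent b) e
    · have hbroot : b ≠ T.root := by
        intro h; subst h; rw [T.parent_root] at hp; exact hl hp
      exact ⟨b, ⟨hbroot, hp, hl⟩, anc_refl T b, ⟨k+1, hb⟩, fun h => hl (by rw [h]; exact ha)⟩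
    · obtain ⟨l, h1, h2, h3, h4⟩ := ih (by rw [← Function.iterate_succ_apply]; exact hb) hp
      exact ⟨l, h1, anc_trans T h2 (anc_parent T b), h3, h4⟩

theorem loss_between' (T : PhyloTree C V) {e : C} {a b : V} (ha : T.label a e)
    (hb : ¬ T.label b e) (h : T.ancestor a b) :
    ∃ l, T.lossAt e l ∧ T.ancestor l b ∧ T.ancestor a l ∧ l ≠ a := by
  obtain ⟨k, hk⟩ := h
  exact loss_between T ha hk hb

theorem gain_between (T : PhyloTree C V) {e : C} {a : V} (ha : ¬ T.label a e) :
    ∀ {k : ℕ} {b : V}, T.parent^[k] b = a → T.label b e →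
      ∃ g, T.gainAt e g ∧ T.ancestor a g := by
  intro k
  induction k with
  | zero =>
    intro b hb hl
    rw [Function.iterate_zero_apply] at hb
    subst hb
    exact absurd hl ha
  | succ k ih =>
    intro b hb hl
    by_cases hp : T.label (T.parent b) e
    · obtain ⟨g, h1, h2⟩ := ih (by rw [← Function.iterate_succ_apply]; exact hb) hp
      exact ⟨g, h1, h2⟩
    · have hbroot : b ≠ T.root := by
        intro h; subst h; rw [T.parent_root] at hp; exact hp hl
      exact ⟨b, ⟨hbroot, hp, hl⟩, ⟨k+1, hb⟩⟩

theorem no_regain (T : PhyloTree C V)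
    (hgl : ∀ c v w, T.gainAt c v → T.lossAt c w → T.ancestor v (T.parent w))
    {e : C} {l q : V} (hl : T.lossAt e l) (h : T.ancestor l q) (hq : T.label q e) : False := by
  obtain ⟨k, hk⟩ := h
  obtain ⟨g, hg, hlg⟩ := gain_between T hl.2.2 hk hq
  have h1 : T.ancestor l (T.parent l) := anc_trans T hlg (hgl e g l hg hl)
  obtain ⟨k', hk'⟩ := h1
  have h2 : T.parent^[k' + 1] l = l := by rw [Function.iterate_succ_apply]; exact hk'
  exact hl.1 (eq_root_of_iterate T (by omega) h2)

theorem label_of (T : PhyloTree C V) {e : C} {g q : V} (hg : T.gainAt e g)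
    (h : T.ancestor g q) (hnl : ∀ l, T.lossAt e l → ¬ T.ancestor l q) : T.label q e := by
  by_contra hq
  obtain ⟨k, hk⟩ := h
  obtain ⟨l, h1, h2, _, _⟩ := loss_between T hg.2.2 hk hq
  exact hnl l h1 h2

end PPX

/-- Let `G` be a maximal reducible graph, `T` a tree solving `G`, and `c, c'` be
overlapping characters occurring in `T` and inactive in `G`. Then either the edges
`c⁺, c'⁺, c⁻, c'⁻` occur in this order along a path (`c'⁻` possibly missing), or the
edges `c'⁺, c⁺, c'⁻, c⁻` occur in this order along a path (`c⁻` possibly missing), or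
`c⁻` and `c'⁻` appear in two distinct paths and, if `c` and `c'` are conflicting in
`G`, then `T` has a species node preceding both `c⁺` and `c'⁺`. -/
theorem overlapping_characters_cases {S C V : Type}
    (G : RBGraph S C) (hwf : G.WellFormed) (hmax : G.MaximalReducible)
    (T : PhyloTree C V) (hsolve : G.SolvedBy T) (c c' : C)
    (hov : G.Overlap c c') (hc : G.inactive c) (hc' : G.inactive c')
    (hocc : (∃ v, T.gainAt c v ∨ T.lossAt c v) ∧ (∃ v, T.gainAt c' v ∨ T.lossAt c' v)) :
    (∃ v₁ v₂ v₃, T.gainAt c v₁ ∧ T.gainAt c' v₂ ∧ T.lossAt c v₃ ∧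
      T.ancestor v₁ v₂ ∧ T.ancestor v₂ v₃ ∧
      ((∃ v₄, T.lossAt c' v₄ ∧ T.ancestor v₃ v₄) ∨ ∀ v, ¬ T.lossAt c' v)) ∨
    (∃ v₁ v₂ v₃, T.gainAt c' v₁ ∧ T.gainAt c v₂ ∧ T.lossAt c' v₃ ∧
      T.ancestor v₁ v₂ ∧ T.ancestor v₂ v₃ ∧
      ((∃ v₄, T.lossAt c v₄ ∧ T.ancestor v₃ v₄) ∨ ∀ v, ¬ T.lossAt c v)) ∨
    ((∃ v w, T.lossAt c v ∧ T.lossAt c' w ∧ ¬ T.ancestor v w ∧ ¬ T.ancestor w v) ∧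
      (G.Conflicting c c' → ∃ u s, G.inGraph (Sum.inl s) ∧ T.Represents G u s ∧
        (∀ v, T.gainAt c v → T.ancestor u (T.parent v)) ∧
        (∀ v, T.gainAt c' v → T.ancestor u (T.parent v)))) := by
  classical
  obtain ⟨hroot_iff, hchange, hguniq, hluniq, hgl, hspec⟩ := hsolve
  have hinact : ∀ e, G.inactive e := by
    intro e hact
    obtain ⟨s, hs⟩ := hact
    have hin : G.inGraph (Sum.inr e) := ⟨Sum.inl s, Or.inr hs⟩
    exact (hmax.2 e hin).1 ⟨s, hs⟩
  have hroot : ∀ e, ¬ T.label T.root e := fun e h => hinact e ((hroot_iff e).1 h)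
  have hM : ∀ (s : S) (e : C), G.M s e ↔ G.black s e := by
    intro s e
    constructor
    · rintro (h | ⟨ha, _⟩)
      · exact h
      · exact absurd ha (hinact e)
    · exact Or.inl
  have hSin : ∀ (s : S) (e : C), G.M s e → G.inGraph (Sum.inl s) :=
    fun s e h => ⟨Sum.inr e, Or.inl ((hM s e).1 h)⟩
  have hCin : ∀ (s : S) (e : C), G.M s e → G.inGraph (Sum.inr e) :=
    fun s e h => ⟨Sum.inl s, Or.inl ((hM s e).1 h)⟩
  have hnode : ∀ (s : S) (e : C), G.M s e → ∃ nd, ∀ e', T.label nd e' ↔ G.M s e' :=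
    fun s e h => hspec s (hSin s e h)
  have glabel : ∀ {e : C} {g q : V}, T.gainAt e g → T.label q e → T.ancestor g q := by
    intro e g q hg hq
    obtain ⟨g', hg', h⟩ := PPX.gain_exists T hroot hq
    rwa [hguniq e g' g hg' hg] at h
  have key : ∀ (c₁ c₂ : C) (v w : V), (∃ s, G.M s c₁ ∧ G.M s c₂) →
      (∃ d, G.M d c₂ ∧ ¬ G.M d c₁) →
      T.gainAt c₁ v → T.gainAt c₂ w → T.ancestor v w →
      ((∃ v₁ v₂ v₃, T.gainAt c₁ v₁ ∧ T.gainAt c₂ v₂ ∧ T.lossAt c₁ v₃ ∧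
          T.ancestor v₁ v₂ ∧ T.ancestor v₂ v₃ ∧
          ((∃ v₄, T.lossAt c₂ v₄ ∧ T.ancestor v₃ v₄) ∨ ∀ q, ¬ T.lossAt c₂ q)) ∨
       ((∃ z z', T.lossAt c₁ z ∧ T.lossAt c₂ z' ∧ ¬ T.ancestor z z' ∧ ¬ T.ancestor z' z) ∧
        (G.Conflicting c₁ c₂ → ∃ u s, G.inGraph (Sum.inl s) ∧ T.Represents G u s ∧
          (∀ q, T.gainAt c₁ q → T.ancestor u (T.parent q)) ∧
          (∀ q, T.gainAt c₂ q → T.ancestor u (T.parent q))))) := by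
    intro c₁ c₂ v w hshare hdex hv hw hvw
    obtain ⟨sstar, hsc1, hsc2⟩ := hshare
    obtain ⟨alpha, halpha⟩ := hnode sstar c₁ hsc1
    have hac1 : T.label alpha c₁ := (halpha c₁).2 hsc1
    have hac2 : T.label alpha c₂ := (halpha c₂).2 hsc2
    have hva : T.ancestor v alpha := glabel hv hac1
    obtain ⟨d, hdc2, hdc1⟩ := hdex
    obtain ⟨nd, hnd⟩ := hnode d c₂ hdc2
    have hndc2 : T.label nd c₂ := (hnd c₂).2 hdc2
    have hndc1 : ¬ T.label nd c₁ := fun h => hdc1 ((hnd c₁).1 h)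
    have hwnd : T.ancestor w nd := glabel hw hndc2
    have hvnd : T.ancestor v nd := PPX.anc_trans T hvw hwnd
    obtain ⟨z, hz, hznd, hvz, hzv⟩ := PPX.loss_between' T hv.2.2 hndc1 hvnd
    have hwa : T.ancestor w alpha := glabel hw hac2
    have hwz : T.ancestor w z := by
      rcases PPX.anc_total T hznd hwnd with h | h
      · exact (PPX.no_regain T hgl hz (PPX.anc_trans T h hwa) hac1).elim
      · exact h
    by_cases hlc2 : ∃ q, T.lossAt c₂ q
    · obtain ⟨z', hz'⟩ := hlc2
      by_cases hzz' : T.ancestor z z'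
      · exact Or.inl ⟨v, w, z, hv, hw, hz, hvw, hwz, Or.inl ⟨z', hz', hzz'⟩⟩
      · by_cases hz'z : T.ancestor z' z
        · exact (PPX.no_regain T hgl hz' (PPX.anc_trans T hz'z hznd) hndc2).elim
        · refine Or.inr ⟨⟨z, z', hz, hz', hzz', hz'z⟩, ?_⟩
          intro hconf
          obtain ⟨⟨s0, hs0g, hs0c1, hs0c2⟩, _, _, _⟩ := hconf
          by_contra h0
          have hfind : ∀ u s, G.inGraph (Sum.inl s) → (∀ e, T.label u e ↔ G.M s e) →
              T.ancestor u v → u ≠ v → False := by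
            intro u s hgs hrep huv hne
            apply h0
            refine ⟨u, s, hgs, hrep, ?_, ?_⟩
            · intro q hq
              rw [hguniq c₁ q v hq hv]
              exact PPX.anc_parent_of_ne T huv hne
            · intro q hq
              rw [hguniq c₂ q w hq hw]
              by_cases hvweq : v = w
              · subst hvweq; exact PPX.anc_parent_of_ne T huv hne
              · exact PPX.anc_trans T huv (PPX.anc_parent_of_ne T hvw hvweq)
          set Inner : S → Prop :=
            fun s => ∃ m, (∀ e, T.label m e ↔ G.M s e) ∧ T.ancestor v m with hInnerDef
          have hInnerStar : Inner sstar := ⟨alpha, halpha, hva⟩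
          have hs0ni : ¬ Inner s0 := by
            rintro ⟨m, hm, hvm⟩
            have hmc1 : ¬ T.label m c₁ := fun h => hs0c1 ((hm c₁).1 h)
            obtain ⟨z2, hz2, hz2m, -, -⟩ := PPX.loss_between' T hv.2.2 hmc1 hvm
            rw [hluniq c₁ z2 z hz2 hz] at hz2m
            have hwm : T.ancestor w m := PPX.anc_trans T hwz hz2m
            have hmc2 : ¬ T.label m c₂ := fun h => hs0c2 ((hm c₂).1 h)
            obtain ⟨z2', hz2', hz2'm, -, -⟩ := PPX.loss_between' T hw.2.2 hmc2 hwm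
            rw [hluniq c₂ z2' z' hz2' hz'] at hz2'm
            rcases PPX.anc_total T hz2m hz2'm with h | h
            · exact hzz' h
            · exact hz'z h
          have hMadj : ∀ (s : S) (x : C), G.adj s x → G.M s x := by
            rintro s x (h | h)
            · exact Or.inl h
            · exact absurd ⟨s, h⟩ (hinact x)
          have cross : ∀ (p : S ⊕ C), Relation.ReflTransGen G.Vadj p (Sum.inl sstar) →
              (∀ s, p = Sum.inl s → ¬ Inner s) →
              (∀ x, p = Sum.inr x → ∃ s, G.M s x ∧ ¬ Inner s) →
              ∃ t' x t'', G.M t' x ∧ G.M t'' x ∧ ¬ Inner t' ∧ Inner t'' := by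
            intro p hpath
            induction hpath using Relation.ReflTransGen.head_induction_on with
            | refl =>
              intro h1 _
              exact absurd hInnerStar (h1 sstar rfl)
            | head hadj htail ih =>
              rename_i pa pb
              intro h1 h2
              rcases pa with s | x
              · rcases pb with s2 | x2
                · exact hadj.elim
                · exact ih (fun s' h => nomatch h)
                    (fun x' h => (Sum.inr.inj h) ▸ ⟨s, hMadj s x2 hadj, h1 s rfl⟩)
              · rcases pb with s2 | x2
                · by_cases hin : Inner s2
                  · obtain ⟨s', hs', hni⟩ := h2 x rfl
                    exact ⟨s', x, s2, hs', hMadj s2 x hadj, hni, hin⟩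
                  · exact ih (fun s'' h => (Sum.inl.inj h) ▸ hin) (fun x' h => nomatch h)
                · exact hadj.elim
          have hpath0 : Relation.ReflTransGen G.Vadj (Sum.inl s0) (Sum.inl sstar) :=
            hmax.1.1.2 _ _ hs0g (hSin sstar c₁ hsc1)
          obtain ⟨t', x, t'', hMt'x, hMt''x, hnt', hit''⟩ :=
            cross (Sum.inl s0) hpath0 (fun s h => (Sum.inl.inj h) ▸ hs0ni)
              (fun x h => nomatch h)
          obtain ⟨n, hn⟩ := hnode t' x hMt'x
          obtain ⟨m, hmr, hvm⟩ := hit''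
          have hnv : ¬ T.ancestor v n := fun h => hnt' ⟨n, hn, h⟩
          have hn_v : ¬ T.ancestor n v := by
            intro h
            by_cases hne : n = v
            · exact hnv (hne ▸ PPX.anc_refl T v)
            · exact hfind n t' (hSin t' x hMt'x) hn h hne
          have hlnx : T.label n x := (hn x).2 hMt'x
          have hlmx : T.label m x := (hmr x).2 hMt''x
          obtain ⟨g, hg, hgn⟩ := PPX.gain_exists T hroot hlnx
          have hgm : T.ancestor g m := glabel hg hlmx
          have hex : ∃ i, T.ancestor (T.parent^[i] n) v := by
            obtain ⟨N, hN⟩ := T.reaches_root n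
            exact ⟨N, by rw [hN]; exact PPX.anc_root T v⟩
          set i0 := Nat.find hex with hi0
          set y := T.parent^[i0] n with hydef
          have hyv : T.ancestor y v := Nat.find_spec hex
          have hyn : T.ancestor y n := ⟨i0, hydef.symm⟩
          have B3 : ∀ q, T.ancestor q n → T.ancestor q v → T.ancestor q y := by
            rintro q ⟨j, hj⟩ hqv
            rcases lt_or_ge j i0 with h | h
            · exact absurd (by rw [hj]; exact hqv) (Nat.find_min hex h)
            · exact ⟨j - i0, by
                rw [hydef, ← Function.iterate_add_apply, show j - i0 + i0 = j by omega, hj]⟩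
          have B4 : ∀ q, T.ancestor q n → ¬ T.ancestor q y →
              ¬ T.ancestor q v ∧ T.ancestor y q := by
            rintro q ⟨j, hj⟩ hq
            have hji : j < i0 := by
              by_contra hcon
              push_neg at hcon
              exact hq ⟨j - i0, by
                rw [hydef, ← Function.iterate_add_apply, show j - i0 + i0 = j by omega, hj]⟩
            constructor
            · intro hqv
              exact (Nat.find_min hex hji) (by rw [hj]; exact hqv)
            · exact ⟨i0 - j, by
                rw [← hj, ← Function.iterate_add_apply, show i0 - j + j = i0 by omega, hydef]⟩
          have hyne_v : y ≠ v := fun h => hnv (h ▸ hyn)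
          have hgv : T.ancestor g v := by
            rcases PPX.anc_total T hgm hvm with h | h
            · exact h
            · exact absurd (PPX.anc_trans T h hgn) hnv
          have hgy : T.ancestor g y := B3 g hgn hgv
          have hlvx : T.label v x := by
            apply PPX.label_of T hg (PPX.anc_trans T hgy hyv)
            intro l hl hlv
            exact PPX.no_regain T hgl hl (PPX.anc_trans T hlv hvm) hlmx
          have hc1in : G.inGraph (Sum.inr c₁) := hCin sstar c₁ hsc1
          have capture : ∀ (h : C) (gh : V), T.gainAt h gh → T.ancestor gh v →
              (∀ l, T.lossAt h l → ¬ T.ancestor l v ∧ ¬ T.ancestor v l) → False := by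
            intro h gh hgh hghv hloss
            have hlab : ∀ q : V, T.ancestor v q → T.label q h := by
              intro q hvq
              apply PPX.label_of T hgh (PPX.anc_trans T hghv hvq)
              intro l hl hlq
              rcases PPX.anc_total T hlq hvq with h' | h'
              · exact (hloss l hl).1 h'
              · exact (hloss l hl).2 h'
            have hsub : ∀ s₁, G.M s₁ c₁ → G.M s₁ h := by
              intro s₁ hs₁
              obtain ⟨q, hq⟩ := hnode s₁ c₁ hs₁
              have hvq : T.ancestor v q := glabel hv ((hq c₁).2 hs₁)
              exact (hq h).1 (hlab q hvq)
            have hdh : G.M d h := (hnd h).1 (hlab nd hvnd)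
            have hss : G.charSpecies c₁ ⊂ G.charSpecies h :=
              ssubset_iff_subset_not_subset.mpr
                ⟨fun s₁ hs₁ => hsub s₁ hs₁, fun hcon => hdc1 (hcon hdh)⟩
            exact (hmax.2 c₁ hc1in).2.2 h (hinact h) hss
          by_cases hB : ∃ l, T.lossAt x l ∧ T.ancestor v l
          · obtain ⟨lx, hlx, hvlx⟩ := hB
            have hrepyt' : ∀ e, T.label y e ↔ G.M t' e := by
              intro e
              constructor
              · intro hye
                by_contra hne
                have hlne : ¬ T.label n e := fun hh => hne ((hn e).1 hh)
                obtain ⟨le, hle, hlen, hyle, hley⟩ := PPX.loss_between' T hye hlne hyn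
                have hlev : ¬ T.ancestor le v := by
                  intro hh
                  exact hley (PPX.anc_antisymm T (B3 le hlen hh) hyle)
                have hvle : ¬ T.ancestor v le := fun hh => hnv (PPX.anc_trans T hh hlen)
                obtain ⟨ge', hge', hge'y⟩ := PPX.gain_exists T hroot hye
                apply capture e ge' hge' (PPX.anc_trans T hge'y hyv)
                intro l hl
                rw [hluniq e l le hl hle]
                exact ⟨hlev, hvle⟩
              · intro hMte
                have hlne : T.label n e := (hn e).2 hMte
                obtain ⟨ge, hge, hgen⟩ := PPX.gain_exists T hroot hlne
                have hgey : T.ancestor ge y := by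
                  by_contra hnot
                  obtain ⟨hgev, hyge⟩ := B4 ge hgen hnot
                  have hvge : ¬ T.ancestor v ge := fun hh => hnv (PPX.anc_trans T hh hgen)
                  have hsub : ∀ s₁, G.M s₁ e → G.M s₁ x := by
                    intro s₁ hs₁
                    obtain ⟨q, hq⟩ := hnode s₁ e hs₁
                    have hgeq : T.ancestor ge q := glabel hge ((hq e).2 hs₁)
                    have hqv : ¬ T.ancestor v q := by
                      intro hh
                      rcases PPX.anc_total T hh hgeq with h' | h'
                      · exact hvge h'
                      · exact hgev h'
                    have hqx : T.label q x := by
                      apply PPX.label_of T hg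
                        (PPX.anc_trans T (PPX.anc_trans T hgy hyge) hgeq)
                      intro l hl hlq
                      rw [hluniq x l lx hl hlx] at hlq
                      exact hqv (PPX.anc_trans T hvlx hlq)
                    exact (hq x).1 hqx
                  have ht''e : ¬ G.M t'' e := by
                    intro hh
                    have hgem : T.ancestor ge m := glabel hge ((hmr e).2 hh)
                    rcases PPX.anc_total T hgem hvm with h' | h'
                    · exact hgev h'
                    · exact hvge h'
                  have heing : G.inGraph (Sum.inr e) := hCin t' e hMte
                  have hss : G.charSpecies e ⊂ G.charSpecies x :=
                    ssubset_iff_subset_not_subset.mpr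
                      ⟨fun s₁ hs₁ => hsub s₁ hs₁, fun hcon => ht''e (hcon hMt''x)⟩
                  exact (hmax.2 e heing).2.2 x (hinact x) hss
                apply PPX.label_of T hge hgey
                intro l hl hly
                exact PPX.no_regain T hgl hl (PPX.anc_trans T hly hyn) hlne
            exact hfind y t' (hSin t' x hMt'x) hrepyt' hyv hyne_v
          · apply capture x g hg (PPX.anc_trans T hgy hyv)
            intro l hl
            constructor
            · intro hh
              exact PPX.no_regain T hgl hl (PPX.anc_trans T hh hvm) hlmx
            · intro hh
              exact hB ⟨l, hl, hh⟩
    · exact Or.inl ⟨v, w, z, hv, hw, hz, hvw, hwz, Or.inr (fun q hq => hlc2 ⟨q, hq⟩)⟩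
  obtain ⟨sstar, hsc, hsc'⟩ := hov.1
  obtain ⟨alpha, halpha⟩ := hnode sstar c hsc
  have hac : T.label alpha c := (halpha c).2 hsc
  have hac' : T.label alpha c' := (halpha c').2 hsc'
  obtain ⟨v, hv, hva⟩ := PPX.gain_exists T hroot hac
  obtain ⟨w, hw, hwa⟩ := PPX.gain_exists T hroot hac'
  have hd1 : ∃ d, G.M d c' ∧ ¬ G.M d c := by
    obtain ⟨d, hd1, hd2⟩ := Set.not_subset.mp hov.2.2
    exact ⟨d, hd1, hd2⟩
  have hd2 : ∃ d, G.M d c ∧ ¬ G.M d c' := by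
    obtain ⟨d, hd1', hd2'⟩ := Set.not_subset.mp hov.2.1
    exact ⟨d, hd1', hd2'⟩
  rcases PPX.anc_total T hva hwa with hvw | hwv
  · rcases key c c' v w ⟨sstar, hsc, hsc'⟩ hd1 hv hw hvw with h | ⟨hfst, himp⟩
    · exact Or.inl h
    · exact Or.inr (Or.inr ⟨hfst, himp⟩)
  · rcases key c' c w v ⟨sstar, hsc', hsc⟩ hd2 hw hv hwv with h | ⟨hfst, himp⟩
    · exact Or.inr (Or.inl h)
    · refine Or.inr (Or.inr ⟨?_, ?_⟩)
      · obtain ⟨za, zb, ha, hb, h1, h2⟩ := hfst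
        exact ⟨zb, za, hb, ha, h2, h1⟩
      · intro hconf
        have hconf' : G.Conflicting c' c := by
          obtain ⟨h00, h01, h10, h11⟩ := hconf
          refine ⟨?_, ?_, ?_, ?_⟩
          · obtain ⟨s, a1, a2, a3⟩ := h00; exact ⟨s, a1, a3, a2⟩
          · obtain ⟨s, a1, a2, a3⟩ := h10; exact ⟨s, a1, a3, a2⟩
          · obtain ⟨s, a1, a2, a3⟩ := h01; exact ⟨s, a1, a3, a2⟩
          · obtain ⟨s, a1, a2, a3⟩ := h11; exact ⟨s, a1, a3, a2⟩
        obtain ⟨u, s, b1, b2, b3, b4⟩ := himp hconf'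
        exact ⟨u, s, b1, b2, b4, b3⟩
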